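/- If m is odd, then A commutes with every gamma operator: A ∘ Γ_I = Γ_I ∘ A for all I ∈ {1, …, 2m}. If m is even, then B commutes with every gamma operator: B ∘ Γ_I = Γ_I ∘ B for all I ∈ {1, …, 2m}. (Hence A is Pin(2m)-equivariant for odd m and B is Pin(2m)-equivariant for even m.) -/

import Mathlib

noncomputable section

/-- The spinor space `P`: complex functions on subsets of `Fin m`
(the fermionic Fock model of the exterior algebra of `ℂ^m`). -/
abbrev SpinorSpace (m : ℕ) := Finset (Fin m) → ℂ

/-- The creation operator `c_j`. -/
def creation {m : ℕ} (j : Fin m) (f : SpinorSpace m) : SpinorSpace m := fun S =>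
  if j ∈ S then (-1 : ℂ) ^ (S.filter fun i => i < j).card * f (S.erase j) else 0

/-- The annihilation operator `a_j`. -/
def annihilation {m : ℕ} (j : Fin m) (f : SpinorSpace m) : SpinorSpace m := fun S =>
  if j ∈ S then 0 else (-1 : ℂ) ^ (S.filter fun i => i < j).card * f (insert j S)

/-- The gamma operators `Γ_I`, `I = 1, …, 2m`, here indexed by `Fin (2 * m)` (0-based):
`Γ_j = c_j + a_j` and `Γ_{m+j} = i (c_j − a_j)` for `j = 1, …, m`. -/
def gammaOp {m : ℕ} (I : Fin (2 * m)) (f : SpinorSpace m) : SpinorSpace m :=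
  if h : (I : ℕ) < m then
    creation ⟨(I : ℕ), h⟩ f + annihilation ⟨(I : ℕ), h⟩ f
  else
    Complex.I • (creation ⟨(I : ℕ) - m, by have := I.isLt; omega⟩ f
      - annihilation ⟨(I : ℕ) - m, by have := I.isLt; omega⟩ f)

/-- The Hermitian inner product `⟨f, g⟩ = Σ_S conj (f S) * g S` on the spinor space. -/
def herm {m : ℕ} (f g : SpinorSpace m) : ℂ :=
  ∑ S : Finset (Fin m), (starRingEnd ℂ) (f S) * g S

/-- The composition `Γ_{I₁} ∘ Γ_{I₂} ∘ ⋯ ∘ Γ_{I_k}` corresponding to a list of indices. -/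
def gammaProd {m : ℕ} (l : List (Fin (2 * m))) : SpinorSpace m → SpinorSpace m :=
  l.foldr (fun I F => gammaOp I ∘ F) id

/-- The conjugation operator `κ`. -/
def conjOp {m : ℕ} (f : SpinorSpace m) : SpinorSpace m := fun S => (starRingEnd ℂ) (f S)

/-- The conjugate-linear operator `A = Γ_1 ∘ Γ_2 ∘ ⋯ ∘ Γ_m ∘ κ`. -/
def opA (m : ℕ) : SpinorSpace m → SpinorSpace m :=
  gammaProd (List.ofFn fun j : Fin m =>
    (⟨(j : ℕ), by have := j.isLt; omega⟩ : Fin (2 * m))) ∘ conjOp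

/-- The conjugate-linear operator `B = Γ_{m+1} ∘ Γ_{m+2} ∘ ⋯ ∘ Γ_{2m} ∘ κ`. -/
def opB (m : ℕ) : SpinorSpace m → SpinorSpace m :=
  gammaProd (List.ofFn fun j : Fin m =>
    (⟨m + (j : ℕ), by have := j.isLt; omega⟩ : Fin (2 * m))) ∘ conjOp

/-!
The operators `Γ_I` pairwise anticommute, by the canonical anticommutation relations of the
`c_j` and `a_j`. Moving `Γ_I` to the front of a product of `k` distinct gammas therefore costs
`(-1)^k`, or `(-1)^(k-1)` if `Γ_I` is itself a factor, and `κ` commutes with `Γ_j` but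
anticommutes with `Γ_{m+j}` because it conjugates the `i`. For `A` both cases give the sign
`(-1)^(m-1)`, and for `B` both give `(-1)^m`.
-/

theorem prod_map_mul_of_pairwise_anticomm {ι 𝕜 R : Type*} [DecidableEq ι] [CommRing 𝕜]
    [Ring R] [Algebra 𝕜 R] {γ : ι → R} (hγ : Pairwise fun i j => γ i * γ j = -(γ j * γ i))
    (l : List ι) (i : ι) :
    (l.map γ).prod * γ i = (-1 : 𝕜) ^ (l.length - l.count i) • (γ i * (l.map γ).prod) := by
  induction l with
  | nil => simp
  | cons J l ih =>
    rw [List.map_cons, List.prod_cons, mul_assoc, ih, mul_smul_comm, ← mul_assoc]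
    rcases eq_or_ne J i with rfl | hJ
    · rw [List.count_cons_self, List.length_cons, Nat.add_sub_add_right, mul_assoc]
    · rw [hγ hJ, List.count_cons_of_ne hJ, List.length_cons,
        Nat.sub_add_comm List.count_le_length, pow_succ, mul_smul, neg_mul, mul_assoc]
      simp

section Fermion

variable {m : ℕ}

lemma neg_one_pow_card_filter_lt_erase {R : Type*} [Ring R] {S : Finset (Fin m)} {j : Fin m}
    (hj : j ∈ S) (k : Fin m) :
    (-1 : R) ^ ((S.erase j).filter fun i => i < k).card
      = (if j < k then -1 else 1) * (-1) ^ (S.filter fun i => i < k).card := by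
  rw [Finset.filter_erase]
  split_ifs with hjk
  · rw [← Finset.card_erase_add_one (Finset.mem_filter.2 ⟨hj, hjk⟩), pow_succ]
    simp
  · rw [Finset.erase_eq_of_notMem (by simp [hjk]), one_mul]

lemma neg_one_pow_card_filter_lt_insert {R : Type*} [Ring R] {S : Finset (Fin m)} {j : Fin m}
    (hj : j ∉ S) (k : Fin m) :
    (-1 : R) ^ ((insert j S).filter fun i => i < k).card
      = (if j < k then -1 else 1) * (-1) ^ (S.filter fun i => i < k).card := by
  have h := neg_one_pow_card_filter_lt_erase (R := R) (Finset.mem_insert_self j S) k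
  rw [Finset.erase_insert hj] at h
  rw [h]
  split_ifs <;> simp

def creationLin (j : Fin m) : Module.End ℂ (SpinorSpace m) where
  toFun := creation j
  map_add' f g := funext fun S => by by_cases hj : j ∈ S <;> simp [creation, hj, mul_add]
  map_smul' z f := funext fun S => by by_cases hj : j ∈ S <;> simp [creation, hj, mul_left_comm]

def annihilationLin (j : Fin m) : Module.End ℂ (SpinorSpace m) where
  toFun := annihilation j
  map_add' f g := funext fun S => by by_cases hj : j ∈ S <;> simp [annihilation, hj, mul_add]
  map_smul' z f := funext fun S => by
    by_cases hj : j ∈ S <;> simp [annihilation, hj, mul_left_comm]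

@[simp] lemma coe_creationLin (j : Fin m) : ⇑(creationLin j) = creation j := rfl

@[simp] lemma coe_annihilationLin (j : Fin m) : ⇑(annihilationLin j) = annihilation j := rfl

lemma creationLin_mul_self (j : Fin m) : creationLin j * creationLin j = 0 :=
  LinearMap.ext fun f => funext fun S => by simp [creation]

lemma annihilationLin_mul_self (j : Fin m) : annihilationLin j * annihilationLin j = 0 :=
  LinearMap.ext fun f => funext fun S => by simp [annihilation]

-- Passing one index past the other changes the sign exactly when it is the smaller one, and
-- exactly one of `j < k`, `k < j` holds; this is the extra `-1` in all three relations below.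
lemma creationLin_mul_creationLin {j k : Fin m} (hjk : j ≠ k) :
    creationLin j * creationLin k = -(creationLin k * creationLin j) := by
  refine LinearMap.ext fun f => funext fun S => ?_
  by_cases hj : j ∈ S <;> by_cases hk : k ∈ S <;> rcases hjk.lt_or_gt with h | h <;>
    simp [creation, hj, hk, hjk, hjk.symm, h, h.not_gt, mul_left_comm,
      neg_one_pow_card_filter_lt_erase, Finset.erase_right_comm]

lemma annihilationLin_mul_annihilationLin {j k : Fin m} (hjk : j ≠ k) :
    annihilationLin j * annihilationLin k = -(annihilationLin k * annihilationLin j) := by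
  refine LinearMap.ext fun f => funext fun S => ?_
  by_cases hj : j ∈ S <;> by_cases hk : k ∈ S <;> rcases hjk.lt_or_gt with h | h <;>
    simp [annihilation, hj, hk, hjk, hjk.symm, h, h.not_gt, mul_left_comm,
      neg_one_pow_card_filter_lt_insert, Finset.insert_comm]

lemma creationLin_mul_annihilationLin {j k : Fin m} (hjk : j ≠ k) :
    creationLin j * annihilationLin k = -(annihilationLin k * creationLin j) := by
  refine LinearMap.ext fun f => funext fun S => ?_
  by_cases hj : j ∈ S <;> by_cases hk : k ∈ S <;> rcases hjk.lt_or_gt with h | h <;>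
    simp [creation, annihilation, hj, hk, hjk, hjk.symm, h, h.not_gt, mul_left_comm,
      neg_one_pow_card_filter_lt_insert, neg_one_pow_card_filter_lt_erase,
      Finset.erase_insert_of_ne]

lemma creationLin_add_annihilationLin_anticomm {j k : Fin m} (hjk : j ≠ k) :
    (creationLin j + annihilationLin j) * (creationLin k + annihilationLin k)
      = -((creationLin k + annihilationLin k) * (creationLin j + annihilationLin j)) := by
  simp only [mul_add, add_mul, creationLin_mul_creationLin hjk,
    annihilationLin_mul_annihilationLin hjk, creationLin_mul_annihilationLin hjk,
    creationLin_mul_annihilationLin hjk.symm]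
  abel

lemma creationLin_sub_annihilationLin_anticomm {j k : Fin m} (hjk : j ≠ k) :
    (creationLin j - annihilationLin j) * (creationLin k - annihilationLin k)
      = -((creationLin k - annihilationLin k) * (creationLin j - annihilationLin j)) := by
  simp only [mul_sub, sub_mul, creationLin_mul_creationLin hjk,
    annihilationLin_mul_annihilationLin hjk, creationLin_mul_annihilationLin hjk,
    creationLin_mul_annihilationLin hjk.symm]
  abel

lemma creationLin_add_sub_anticomm (j k : Fin m) :
    (creationLin j + annihilationLin j) * (creationLin k - annihilationLin k)
      = -((creationLin k - annihilationLin k) * (creationLin j + annihilationLin j)) := by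
  rcases eq_or_ne j k with rfl | hjk
  · simp only [mul_add, add_mul, mul_sub, sub_mul, creationLin_mul_self,
      annihilationLin_mul_self]
    abel
  · simp only [mul_add, add_mul, mul_sub, sub_mul, creationLin_mul_creationLin hjk,
      annihilationLin_mul_annihilationLin hjk, creationLin_mul_annihilationLin hjk,
      creationLin_mul_annihilationLin hjk.symm]
    abel

def gammaLin (I : Fin (2 * m)) : Module.End ℂ (SpinorSpace m) :=
  if h : (I : ℕ) < m then creationLin ⟨I, h⟩ + annihilationLin ⟨I, h⟩
  else Complex.I • (creationLin ⟨I - m, by omega⟩ - annihilationLin ⟨I - m, by omega⟩)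

@[simp] lemma coe_gammaLin (I : Fin (2 * m)) : ⇑(gammaLin I) = gammaOp I := by
  unfold gammaLin gammaOp
  split <;> rfl

lemma gammaLin_anticomm {I J : Fin (2 * m)} (hIJ : I ≠ J) :
    gammaLin I * gammaLin J = -(gammaLin J * gammaLin I) := by
  have hIJ' : (I : ℕ) ≠ J := Fin.val_ne_of_ne hIJ
  unfold gammaLin
  split_ifs with hI hJ hJ
  · exact creationLin_add_annihilationLin_anticomm (by simpa [Fin.ext_iff] using hIJ')
  · rw [mul_smul_comm, smul_mul_assoc, creationLin_add_sub_anticomm, smul_neg]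
  · rw [mul_smul_comm, smul_mul_assoc, creationLin_add_sub_anticomm, smul_neg, neg_neg]
  · rw [smul_mul_smul_comm, smul_mul_smul_comm,
      creationLin_sub_annihilationLin_anticomm (by simp [Fin.ext_iff]; omega), smul_neg]

lemma gammaProd_eq_coe_prod (l : List (Fin (2 * m))) :
    gammaProd l = ⇑(l.map gammaLin).prod := by
  induction l with
  | nil => rfl
  | cons J l ih => rw [List.map_cons, List.prod_cons, Module.End.coe_mul, coe_gammaLin, ← ih]; rfl

lemma star_creation (j : Fin m) (f : SpinorSpace m) :
    star (creation j f) = creation j (star f) := by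
  funext S
  by_cases hj : j ∈ S <;> simp [creation, hj]

lemma star_annihilation (j : Fin m) (f : SpinorSpace m) :
    star (annihilation j f) = annihilation j (star f) := by
  funext S
  by_cases hj : j ∈ S <;> simp [annihilation, hj]

lemma conjOp_gammaOp (I : Fin (2 * m)) (f : SpinorSpace m) :
    conjOp (gammaOp I f)
      = (-1 : ℂ) ^ (if (I : ℕ) < m then 0 else 1) • gammaOp I (conjOp f) := by
  change star (gammaOp I f) = _ • gammaOp I (star f)
  unfold gammaOp
  split_ifs <;> simp [star_creation, star_annihilation, star_sub]

lemma gammaProd_conjOp_gammaOp_of_even (l : List (Fin (2 * m))) (I : Fin (2 * m))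
    (h : Even (l.length - l.count I + if (I : ℕ) < m then 0 else 1)) (f : SpinorSpace m) :
    gammaProd l (conjOp (gammaOp I f)) = gammaOp I (gammaProd l (conjOp f)) := by
  have hcomm := LinearMap.congr_fun
    (prod_map_mul_of_pairwise_anticomm (𝕜 := ℂ) (fun _ _ => gammaLin_anticomm) l I) (conjOp f)
  rw [Module.End.mul_apply, LinearMap.smul_apply, Module.End.mul_apply, coe_gammaLin,
    ← gammaProd_eq_coe_prod] at hcomm
  rw [conjOp_gammaOp, gammaProd_eq_coe_prod, map_smul, ← gammaProd_eq_coe_prod, hcomm, smul_smul,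
    ← pow_add, add_comm, h.neg_one_pow, one_smul]

lemma count_ofFn_castLE (I : Fin (2 * m)) :
    (List.ofFn fun j : Fin m => (⟨(j : ℕ), by omega⟩ : Fin (2 * m))).count I
      = if (I : ℕ) < m then 1 else 0 := by
  have hnodup : (List.ofFn fun j : Fin m => (⟨(j : ℕ), by omega⟩ : Fin (2 * m))).Nodup :=
    List.nodup_ofFn.2 fun a b h => by simpa [Fin.ext_iff] using h
  split_ifs with hI
  · exact List.count_eq_one_of_mem hnodup (List.mem_ofFn.2 ⟨⟨I, hI⟩, rfl⟩)
  · exact List.count_eq_zero_of_not_mem fun h => by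
      obtain ⟨j, rfl⟩ := List.mem_ofFn.1 h
      exact hI j.isLt

lemma count_ofFn_natAdd (I : Fin (2 * m)) :
    (List.ofFn fun j : Fin m => (⟨m + (j : ℕ), by omega⟩ : Fin (2 * m))).count I
      = if (I : ℕ) < m then 0 else 1 := by
  have hnodup : (List.ofFn fun j : Fin m => (⟨m + (j : ℕ), by omega⟩ : Fin (2 * m))).Nodup :=
    List.nodup_ofFn.2 fun a b h => by simpa [Fin.ext_iff] using h
  split_ifs with hI
  · exact List.count_eq_zero_of_not_mem fun h => by
      obtain ⟨j, rfl⟩ := List.mem_ofFn.1 h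
      simp at hI
  · exact List.count_eq_one_of_mem hnodup
      (List.mem_ofFn.2 ⟨⟨I - m, by omega⟩, Fin.ext (by simp; omega)⟩)

end Fermion

theorem opA_opB_pin_equivariant (m : ℕ) :
    (Odd m → ∀ I : Fin (2 * m), ∀ f : SpinorSpace m,
      opA m (gammaOp I f) = gammaOp I (opA m f)) ∧
    (Even m → ∀ I : Fin (2 * m), ∀ f : SpinorSpace m,
      opB m (gammaOp I f) = gammaOp I (opB m f)) := by
  refine ⟨fun hodd I f => ?_, fun heven I f => ?_⟩
  · refine gammaProd_conjOp_gammaOp_of_even _ I ?_ f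
    rw [List.length_ofFn, count_ofFn_castLE, Nat.even_iff]
    have := Nat.odd_iff.1 hodd
    split_ifs <;> omega
  · refine gammaProd_conjOp_gammaOp_of_even _ I ?_ f
    rw [List.length_ofFn, count_ofFn_natAdd, Nat.even_iff]
    have := Nat.even_iff.1 heven
    have hI := I.isLt
    split_ifs <;> omega
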